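/- arXiv:1812.08313 — 2 statements merged into one kernel-verified Lean document; each statement's English description precedes it below -/
import Mathlib

section
/- Let G be a non-degenerate PCR over a PCS Σ. The map χ sending a PCR morphism f : G → 2 (where 2 is the trivial PCR on {0,1}) to f⁻¹(1) is a bijection between the set of PCR morphisms from G to 2 and the set G° of maximal G-coherent subsets of Σ. -/
universe u v

structure PCS (α : Type*) where
  star : α → α
  zero : α
  star_star : ∀ a, star (star a) = a
  star_ne_self : ∀ a, star a ≠ a

variable {α : Type*}

/-- A pointed complemented relation (PCR) over the PCS `P`. -/
def IsPCR (P : PCS α) (G : Set (α × α)) : Prop :=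
  (∀ a, (P.zero, a) ∈ G) ∧ ∀ a b, (a, b) ∈ G ↔ (P.star b, P.star a) ∈ G

/-- `a ≤_G b`: the reflexive-transitive closure of the relation `G`. -/
def pcrLe (G : Set (α × α)) (a b : α) : Prop :=
  Relation.ReflTransGen (fun x y => (x, y) ∈ G) a b

/-- A set `S` is `G`-coherent if no `a, b ∈ S` satisfy `a ≤_G b*`. -/
def Coherent (P : PCS α) (G : Set (α × α)) (S : Set α) : Prop :=
  ∀ a ∈ S, ∀ b ∈ S, ¬ pcrLe G a (P.star b)

/-- Forward closure `↑S = {b | ∃ a ∈ S, a ≤_G b}`. -/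
def upClosure (G : Set (α × α)) (S : Set α) : Set α :=
  {b | ∃ a ∈ S, pcrLe G a b}

/-- Maximal `G`-coherent subsets; the members of the dual space `G°`. -/
def MaxCoherent (P : PCS α) (G : Set (α × α)) (S : Set α) : Prop :=
  Coherent P G S ∧ ∀ T, Coherent P G T → S ⊆ T → S = T

/-- `G` is non-degenerate: no `a` satisfies both `a ≤_G a*` and `a* ≤_G a`. -/
def Nondegenerate (P : PCS α) (G : Set (α × α)) : Prop :=
  ∀ a, ¬ (pcrLe G a (P.star a) ∧ pcrLe G (P.star a) a)

/-- A complete `*`-selection: exactly one of `a`, `a*` belongs to `S`, for each `a`. -/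
def CompleteSel (P : PCS α) (S : Set α) : Prop :=
  ∀ a, Xor' (a ∈ S) (P.star a ∈ S)

/-- The half-space `⟨S;G⟩ = {u ∈ G° : S ⊆ u}`. -/
def halfspace (P : PCS α) (G : Set (α × α)) (S : Set α) : Set (Set α) :=
  {u | MaxCoherent P G u ∧ S ⊆ u}

/-- Coherent projection `coh_G(T) = ↑T ∖ (↑T)*`. -/
def cohProj (P : PCS α) (G : Set (α × α)) (T : Set α) : Set α :=
  upClosure G T \ (P.star '' upClosure G T)

/-- Morphisms of PCRs. -/
def IsPCRHom {β : Type*} (P : PCS α) (Q : PCS β) (G : Set (α × α)) (H : Set (β × β))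
    (f : α → β) : Prop :=
  f P.zero = Q.zero ∧ (∀ a, f (P.star a) = Q.star (f a)) ∧
    ∀ a b, (a, b) ∈ G → pcrLe H (f a) (f b)

/-- A poc set: a PCR whose induced relation `≤_G` is antisymmetric and whose only
negligible element is `0`. -/
def IsPocSet (P : PCS α) (G : Set (α × α)) : Prop :=
  IsPCR P G ∧ (∀ a b, pcrLe G a b → pcrLe G b a → a = b) ∧
    ∀ a, pcrLe G a (P.star a) → a = P.zero

/-- The two-element PCS on `Bool`, with `0 = false` and `* = not`. -/
def boolPCS : PCS Bool :=
  ⟨Bool.not, false, by decide, by decide⟩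

/-- The trivial PCR `2` over the two-element PCS. -/
def trivialPCR : Set (Bool × Bool) :=
  {p | p.1 = false ∨ p.2 = true}

/-!
A morphism `f : G → 2` is the same thing as the set `f⁻¹(1)`, which must be a complete
`*`-selection (because `f` commutes with `*`) closed upwards along `G` (because `f` is monotone).
Over a non-degenerate PCR the maximal coherent sets are exactly the upward closed complete
selections. The point is that one of `a`, `a*` can always be added to a coherent set `S`:
otherwise some `x ∈ S ∪ {a}` lies below `a*` and some `y ∈ S ∪ {a*}` lies below `a`, so that
`y ≤ a ≤ x*`, and this chain either contradicts the coherence of `S` or, when `x = a` and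
`y = a*`, gives `a ≤ a*` and `a* ≤ a`.
-/

variable {P : PCS α} {G : Set (α × α)} {S : Set α} {a b : α}

attribute [simp] PCS.star_star

def IsUpClosed (G : Set (α × α)) (S : Set α) : Prop :=
  ∀ a b, (a, b) ∈ G → a ∈ S → b ∈ S

lemma pcrLe_star_of_pcrLe (hG : IsPCR P G) (h : pcrLe G a b) :
    pcrLe G (P.star b) (P.star a) := by
  induction h with
  | refl => exact .refl
  | tail _ hbc ih => exact .head ((hG.2 _ _).mp hbc) ih

lemma pcrLe_star_comm (hG : IsPCR P G) : pcrLe G a (P.star b) ↔ pcrLe G b (P.star a) :=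
  ⟨fun h => by simpa using pcrLe_star_of_pcrLe hG h,
    fun h => by simpa using pcrLe_star_of_pcrLe hG h⟩

lemma IsUpClosed.mem_of_pcrLe (hS : IsUpClosed G S) (ha : a ∈ S) (hab : pcrLe G a b) :
    b ∈ S := by
  induction hab with
  | refl => exact ha
  | tail _ hbc ih => exact hS _ _ hbc ih

lemma pcrLe_trivialPCR_iff {x y : Bool} : pcrLe trivialPCR x y ↔ (x = true → y = true) := by
  have hup : IsUpClosed trivialPCR {true} := by rintro _ _ (h | h) rfl <;> simp_all
  refine ⟨fun h hx => hup.mem_of_pcrLe (a := x) hx h, fun h => .single ?_⟩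
  cases x <;> simp_all [trivialPCR]

lemma Coherent.star_not_mem (hS : Coherent P G S) (ha : a ∈ S) : P.star a ∉ S := fun ha' =>
  hS a ha (P.star a) ha' (by simpa using .refl)

lemma coherent_insert_iff (hG : IsPCR P G) :
    Coherent P G (insert a S) ↔
      ¬ pcrLe G a (P.star a) ∧ (∀ s ∈ S, ¬ pcrLe G s (P.star a)) ∧ Coherent P G S := by
  simp only [Coherent, Set.forall_mem_insert, pcrLe_star_comm hG (a := a), forall_and]
  tauto

lemma Coherent.coherent_insert_or_insert_star (hG : IsPCR P G) (hnd : Nondegenerate P G)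
    (hS : Coherent P G S) (a : α) :
    Coherent P G (insert a S) ∨ Coherent P G (insert (P.star a) S) := by
  by_contra h
  simp only [coherent_insert_iff hG, P.star_star, and_iff_left hS, not_or, not_and_or, not_forall,
    not_not, exists_prop] at h
  obtain ⟨h₁, h₂⟩ := h
  have hflip {x : α} (hx : pcrLe G x (P.star a)) : pcrLe G a (P.star x) :=
    (pcrLe_star_comm hG).mp hx
  obtain haa | ⟨s, hs, hsa⟩ := h₁ <;> obtain haa' | ⟨t, ht, hta⟩ := h₂
  · exact hnd a ⟨haa, haa'⟩
  · exact hS t ht t ht (hta.trans (haa.trans (pcrLe_star_of_pcrLe hG hta)))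
  · exact hS s hs s hs (hsa.trans (haa'.trans (hflip hsa)))
  · exact hS t ht s hs (hta.trans (hflip hsa))

lemma MaxCoherent.mem_or_star_mem (hG : IsPCR P G) (hnd : Nondegenerate P G)
    (hS : MaxCoherent P G S) (a : α) : a ∈ S ∨ P.star a ∈ S := by
  rcases hS.1.coherent_insert_or_insert_star hG hnd a with h | h
  · exact .inl (hS.2 _ h (Set.subset_insert _ _) ▸ Set.mem_insert _ _)
  · exact .inr (hS.2 _ h (Set.subset_insert _ _) ▸ Set.mem_insert _ _)

lemma MaxCoherent.of_coherent_of_mem_or_star_mem (hS : Coherent P G S)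
    (hcomp : ∀ a, a ∈ S ∨ P.star a ∈ S) : MaxCoherent P G S := by
  refine ⟨hS, fun T hT hST => hST.antisymm fun t ht => ?_⟩
  exact (hcomp t).resolve_right fun ht' => hT.star_not_mem ht (hST ht')

lemma completeSel_iff : CompleteSel P S ↔ ∀ a, P.star a ∈ S ↔ a ∉ S :=
  forall_congr' fun _ => (xor_comm _ _).to_iff.trans xor_iff_iff_not

lemma maxCoherent_iff_completeSel_and_isUpClosed (hG : IsPCR P G) (hnd : Nondegenerate P G) :
    MaxCoherent P G S ↔ CompleteSel P S ∧ IsUpClosed G S := by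
  rw [completeSel_iff]
  constructor
  · intro hS
    refine ⟨fun a => ⟨fun h ha => hS.1.star_not_mem ha h,
      (hS.mem_or_star_mem hG hnd a).resolve_left⟩, fun a b hab ha => ?_⟩
    refine (hS.mem_or_star_mem hG hnd b).resolve_right fun hb => ?_
    exact hS.1 a ha _ hb (by simpa using .single hab)
  · rintro ⟨hsel, hup⟩
    have hS : Coherent P G S := fun a ha b hb hab =>
      (hsel b).mp (hup.mem_of_pcrLe ha hab) hb
    exact .of_coherent_of_mem_or_star_mem hS fun a => or_iff_not_imp_left.mpr (hsel a).mpr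

lemma isPCRHom_trivialPCR_iff (hG : IsPCR P G) {f : α → Bool} :
    IsPCRHom P boolPCS G trivialPCR f ↔
      CompleteSel P (f ⁻¹' {true}) ∧ IsUpClosed G (f ⁻¹' {true}) := by
  simp only [IsPCRHom, completeSel_iff, IsUpClosed, pcrLe_trivialPCR_iff, boolPCS,
    Set.mem_preimage, Set.mem_singleton_iff, Bool.not_eq_true]
  constructor
  · rintro ⟨-, hstar, hmono⟩
    exact ⟨fun a => by cases h : f a <;> simp [hstar, h], hmono⟩
  · rintro ⟨hsel, hmono⟩
    refine ⟨?_, fun a => ?_, hmono⟩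
    · -- `0 ≤ 0*`, so `f 0 = true` would force `f 0* = true` as well
      by_contra h
      have h0 : f P.zero = true := by simpa using h
      simpa [h0] using (hsel P.zero).mp (hmono _ _ (hG.1 _) h0)
    · cases h : f a <;> simpa [h] using hsel a

lemma bijOn_preimage_true {p : (α → Bool) → Prop} {q : Set α → Prop}
    (h : ∀ f, p f ↔ q (f ⁻¹' {true})) :
    Set.BijOn (fun f : α → Bool => f ⁻¹' {true}) {f | p f} {S | q S} := by
  classical
  refine ⟨fun f hf => (h f).mp hf, fun f _ g _ hfg => ?_, fun S hS => ?_⟩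
  · funext a
    exact Bool.eq_iff_iff.mpr (Set.ext_iff.mp hfg a)
  · have hS' : (fun a => decide (a ∈ S)) ⁻¹' {true} = S := by ext; simp
    exact ⟨_, (h _).mpr (hS'.symm ▸ hS), hS'⟩

/-- `f ↦ f⁻¹(1)` is a bijection between PCR morphisms `G → 2` and `G°`. -/
theorem stmt2 (P : PCS α) (G : Set (α × α)) (hG : IsPCR P G) (hnd : Nondegenerate P G) :
    Set.BijOn (fun f : α → Bool => f ⁻¹' {true})
      {f | IsPCRHom P boolPCS G trivialPCR f} {S | MaxCoherent P G S} :=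
  bijOn_preimage_true fun _ =>
    (isPCRHom_trivialPCR_iff hG).trans (maxCoherent_iff_completeSel_and_isUpClosed hG hnd).symm
end

section
/- For every non-degenerate PCR G over a PCS Σ, there exists a poc set Ĝ and a surjective PCR morphism π : G → Ĝ such that every PCR morphism f from G to a poc set P factors uniquely as f = f̂ ∘ π for a PCR morphism f̂ : Ĝ → P. -/
/-!
Declare `a ≼ b` when `a ≤_G b`, or `a` is negligible, or `b*` is negligible. Non-degeneracy
makes `≼` a preorder (the only obstruction to transitivity is an element `b` with `b` and `b*`
both negligible), and `Ĝ` is its antisymmetrization: this collapses each `≤_G`-class, sends the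
negligible elements to `0` and the co-negligible ones to `0*`. A morphism into a poc set sends
negligible elements to `0`, hence is monotone for `≼` and, by antisymmetry of the target,
constant on classes.
-/

universe u v

variable {α : Type*}

section PCR

variable {P : PCS α} {G : Set (α × α)}

def Negligible (P : PCS α) (G : Set (α × α)) (a : α) : Prop :=
  pcrLe G a (P.star a)

theorem IsPCR.pcrLe_star (hG : IsPCR P G) {a b : α} (h : pcrLe G a b) :
    pcrLe G (P.star b) (P.star a) := by
  induction h with
  | refl => exact .refl
  | tail _ hstep ih => exact .head ((hG.2 _ _).mp hstep) ih

theorem IsPCR.zero_pcrLe (hG : IsPCR P G) (a : α) : pcrLe G P.zero a :=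
  .single (hG.1 a)

theorem IsPCR.pcrLe_star_zero (hG : IsPCR P G) (a : α) : pcrLe G a (P.star P.zero) := by
  simpa only [P.star_star] using hG.pcrLe_star (hG.zero_pcrLe (P.star a))

theorem negligible_star_iff {a : α} : Negligible P G (P.star a) ↔ pcrLe G (P.star a) a := by
  rw [Negligible, P.star_star]

theorem IsPCR.negligible_of_pcrLe (hG : IsPCR P G) {a b : α} (hab : pcrLe G a b)
    (hb : Negligible P G b) : Negligible P G a :=
  hab.trans (hb.trans (hG.pcrLe_star hab))

theorem IsPCR.negligible_star_of_pcrLe (hG : IsPCR P G) {a b : α} (hab : pcrLe G a b)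
    (ha : Negligible P G (P.star a)) : Negligible P G (P.star b) :=
  hG.negligible_of_pcrLe (hG.pcrLe_star hab) ha

theorem Nondegenerate.not_negligible_and_star (hnd : Nondegenerate P G) (a : α) :
    ¬ (Negligible P G a ∧ Negligible P G (P.star a)) :=
  fun ⟨ha, ha'⟩ => hnd a ⟨ha, negligible_star_iff.mp ha'⟩

theorem IsPCRHom.pcrLe_map {β : Type*} {Q : PCS β} {H : Set (β × β)} {f : α → β}
    (hf : IsPCRHom P Q G H f) {a b : α} (h : pcrLe G a b) : pcrLe H (f a) (f b) := by
  induction h with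
  | refl => exact .refl
  | tail _ hstep ih => exact ih.trans (hf.2.2 _ _ hstep)

theorem IsPCRHom.map_eq_zero_of_negligible {β : Type*} {Q : PCS β} {H : Set (β × β)}
    {f : α → β} (hf : IsPCRHom P Q G H f) (hQ : IsPocSet Q H) {a : α}
    (ha : Negligible P G a) : f a = Q.zero :=
  hQ.2.2 _ (by simpa only [hf.2.1] using hf.pcrLe_map ha)

end PCR

namespace PocQuotient

variable {P : PCS α} {G : Set (α × α)}

variable (P G) in
def le (a b : α) : Prop :=
  pcrLe G a b ∨ Negligible P G a ∨ Negligible P G (P.star b)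

theorem le_refl (a : α) : le P G a a :=
  Or.inl .refl

theorem le_trans (hG : IsPCR P G) (hnd : Nondegenerate P G) {a b c : α}
    (hab : le P G a b) (hbc : le P G b c) : le P G a c := by
  rcases hab with hab | ha | hb
  · rcases hbc with hbc | hb | hc
    · exact Or.inl (hab.trans hbc)
    · exact Or.inr (Or.inl (hG.negligible_of_pcrLe hab hb))
    · exact Or.inr (Or.inr hc)
  · exact Or.inr (Or.inl ha)
  · rcases hbc with hbc | hb' | hc
    · exact Or.inr (Or.inr (hG.negligible_star_of_pcrLe hbc hb))
    · exact (hnd.not_negligible_and_star b ⟨hb', hb⟩).elim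
    · exact Or.inr (Or.inr hc)

theorem le_star (hG : IsPCR P G) {a b : α} (h : le P G a b) : le P G (P.star b) (P.star a) := by
  rcases h with h | ha | hb
  · exact Or.inl (hG.pcrLe_star h)
  · exact Or.inr (Or.inr (by rwa [P.star_star]))
  · exact Or.inr (Or.inl hb)

theorem le_star_iff (hG : IsPCR P G) {a b : α} :
    le P G (P.star b) (P.star a) ↔ le P G a b :=
  ⟨fun h => by simpa only [P.star_star] using le_star hG h, le_star hG⟩

theorem zero_le (hG : IsPCR P G) (a : α) : le P G P.zero a :=
  Or.inl (hG.zero_pcrLe a)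

theorem negligible_of_le_star {a : α} (h : le P G a (P.star a)) : Negligible P G a := by
  rcases h with h | h | h
  · exact h
  · exact h
  · rwa [P.star_star] at h

def setoid (hG : IsPCR P G) (hnd : Nondegenerate P G) : Setoid α where
  r a b := le P G a b ∧ le P G b a
  iseqv :=
    ⟨fun a => ⟨le_refl a, le_refl a⟩, fun h => ⟨h.2, h.1⟩,
      fun h₁ h₂ => ⟨le_trans hG hnd h₁.1 h₂.1, le_trans hG hnd h₂.2 h₁.2⟩⟩

end PocQuotient

def PocQuotient {P : PCS α} {G : Set (α × α)} (hG : IsPCR P G) (hnd : Nondegenerate P G) :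
    Type _ :=
  Quotient (PocQuotient.setoid hG hnd)

namespace PocQuotient

variable {P : PCS α} {G : Set (α × α)} (hG : IsPCR P G) (hnd : Nondegenerate P G)

def mk (a : α) : PocQuotient hG hnd :=
  Quotient.mk _ a

theorem mk_surjective : Function.Surjective (mk hG hnd) :=
  Quotient.mk_surjective

def pcs : PCS (PocQuotient hG hnd) where
  star := Quotient.map P.star fun _ _ h => ⟨le_star hG h.2, le_star hG h.1⟩
  zero := mk hG hnd P.zero
  star_star := Quotient.ind fun a => congrArg (mk hG hnd) (P.star_star a)
  star_ne_self := Quotient.ind fun a h =>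
    have hle := Quotient.exact h
    hnd.not_negligible_and_star a
      ⟨negligible_of_le_star hle.2, negligible_of_le_star (by rw [P.star_star]; exact hle.1)⟩

def rel : Set (PocQuotient hG hnd × PocQuotient hG hnd) :=
  {p | Quotient.lift₂ (s₁ := setoid hG hnd) (s₂ := setoid hG hnd) (le P G)
    (fun _ _ _ _ ha hb => propext
      ⟨fun h => le_trans hG hnd ha.2 (le_trans hG hnd h hb.1),
        fun h => le_trans hG hnd ha.1 (le_trans hG hnd h hb.2)⟩) p.1 p.2}

theorem pcrLe_rel_iff {x y : PocQuotient hG hnd} :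
    pcrLe (rel hG hnd) x y ↔ (x, y) ∈ rel hG hnd := by
  refine ⟨fun h => ?_, fun h => .single h⟩
  induction h with
  | refl => exact Quotient.inductionOn x le_refl
  | @tail y z _ hyz ih =>
    induction x, y, z using Quotient.inductionOn₃ with
    | _ a b c => exact le_trans hG hnd ih hyz

theorem isPocSet : IsPocSet (pcs hG hnd) (rel hG hnd) := by
  refine ⟨⟨fun x => Quotient.inductionOn x (zero_le hG), fun x y => ?_⟩,
    fun x y hxy hyx => ?_, fun x hx => ?_⟩
  · induction x, y using Quotient.inductionOn₂ with
    | _ a b => exact (le_star_iff hG).symm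
  · rw [pcrLe_rel_iff] at hxy hyx
    induction x, y using Quotient.inductionOn₂ with
    | _ a b => exact Quotient.sound ⟨hxy, hyx⟩
  · rw [pcrLe_rel_iff] at hx
    induction x using Quotient.inductionOn with
    | _ a => exact Quotient.sound ⟨Or.inr (Or.inl (negligible_of_le_star hx)), zero_le hG a⟩

theorem isPCRHom_mk : IsPCRHom P (pcs hG hnd) G (rel hG hnd) (mk hG hnd) :=
  ⟨rfl, fun _ => rfl, fun _ _ hab => .single (Or.inl (.single hab))⟩

section Lift

variable {γ : Type*} {R : PCS γ} {K : Set (γ × γ)} {f : α → γ}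

theorem pcrLe_map_of_le (hR : IsPocSet R K) (hf : IsPCRHom P R G K f) {a b : α}
    (h : le P G a b) : pcrLe K (f a) (f b) := by
  rcases h with h | ha | hb
  · exact hf.pcrLe_map h
  · rw [hf.map_eq_zero_of_negligible hR ha]
    exact hR.1.zero_pcrLe _
  · have hfb : f b = R.star R.zero := by
      rw [← hf.map_eq_zero_of_negligible hR hb, ← hf.2.1, P.star_star]
    rw [hfb]
    exact hR.1.pcrLe_star_zero _

def lift (hR : IsPocSet R K) (hf : IsPCRHom P R G K f) : PocQuotient hG hnd → γ :=
  Quotient.lift f fun _ _ h =>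
    hR.2.1 _ _ (pcrLe_map_of_le hR hf h.1) (pcrLe_map_of_le hR hf h.2)

theorem isPCRHom_lift (hR : IsPocSet R K) (hf : IsPCRHom P R G K f) :
    IsPCRHom (pcs hG hnd) R (rel hG hnd) K (lift hG hnd hR hf) :=
  ⟨hf.1, Quotient.ind hf.2.1, fun x y => Quotient.inductionOn₂ x y fun _ _ h =>
    pcrLe_map_of_le hR hf h⟩

theorem existsUnique_lift (hR : IsPocSet R K) (hf : IsPCRHom P R G K f) :
    ∃! g : PocQuotient hG hnd → γ,
      IsPCRHom (pcs hG hnd) R (rel hG hnd) K g ∧ f = g ∘ mk hG hnd :=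
  ⟨lift hG hnd hR hf, ⟨isPCRHom_lift hG hnd hR hf, rfl⟩,
    fun _ hg => funext (Quotient.ind fun a => (congrFun hg.2 a).symm)⟩

end Lift

end PocQuotient

/-- Existence of the canonical poc set quotient with its universal property. -/
theorem stmt4 {α : Type u} (P : PCS α) (G : Set (α × α)) (hG : IsPCR P G)
    (hnd : Nondegenerate P G) :
    ∃ (β : Type u) (Q : PCS β) (H : Set (β × β)) (π : α → β),
      IsPocSet Q H ∧ Function.Surjective π ∧ IsPCRHom P Q G H π ∧
      ∀ (γ : Type u) (R : PCS γ) (K : Set (γ × γ)), IsPocSet R K →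
        ∀ f : α → γ, IsPCRHom P R G K f →
          ∃! g : β → γ, IsPCRHom Q R H K g ∧ f = g ∘ π :=
  ⟨PocQuotient hG hnd, PocQuotient.pcs hG hnd, PocQuotient.rel hG hnd, PocQuotient.mk hG hnd,
    PocQuotient.isPocSet hG hnd, PocQuotient.mk_surjective hG hnd, PocQuotient.isPCRHom_mk hG hnd,
    fun _ _ _ hR _ hf => PocQuotient.existsUnique_lift hG hnd hR hf⟩
end
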